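/- Let d be a squarefree integer with d ∈ {-26, -3, -1, 1, 3, 26} excluded, i.e., d ∉ {-26,-3,-1,1,3,26}. If x₀ ∈ ℚ̄ is an x-coordinate of a point of order 4 on E: y² = (x-8)(x-9)(x+18) and f₁(x) = (x-8)(x-9)(x+18), then d·f₁(x₀) is not a square in ℚ(x₀). -/

import Mathlib

/-!
If `P = (x₀, y₀)` has order 4, then `2P = (e, 0)` for a root `e` of `f = (X - 8)(X - 9)(X + 18)`,
and the duplication formula turns `x(2P) = e` into `(x₀ - e)² = (e - e')(e - e'') =: D` for the
other two roots `e', e''`. So `ℚ(x₀) = ℚ(√D)` with `D ∈ {-26, 27, 702}`, none a rational square.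
Writing `s = x₀ - e`, `α = e - e'`, `β = e - e''`, we have `f(x₀) = s(s + α)(s + β)` and `s² = αβ`;
comparing the coordinates of `(a + bs)² = d f(x₀)` in the basis `1, s` gives
`(b² - dα)(b² - dβ) = 0`. Hence `d` is the squarefree part of `α` or `β`, which for
`e = 8, 9, -18` is one of `-1, 26`, resp. `1, 3`, resp. `-26, -3`.
-/

open WeierstrassCurve.Affine

/-- The elliptic curve `E : y² = (x-8)(x-9)(x+18)`, i.e. `y² = x³ + x² - 234x + 1296`,
base-changed to the algebraic closure of `ℚ`. -/
noncomputable def E17 : WeierstrassCurve.Affine (AlgebraicClosure ℚ) :=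
  { a₁ := 0, a₂ := 1, a₃ := 0, a₄ := -234, a₆ := 1296 }

namespace WeierstrassCurve.Affine

variable {F : Type*} [Field F]

def ofRoots (e₁ e₂ e₃ : F) : Affine F :=
  { a₁ := 0, a₂ := -(e₁ + e₂ + e₃), a₃ := 0, a₄ := e₁ * e₂ + e₁ * e₃ + e₂ * e₃,
    a₆ := -(e₁ * e₂ * e₃) }

section ofRoots

variable {e₁ e₂ e₃ x y : F}

lemma negY_ofRoots : (ofRoots e₁ e₂ e₃).negY x y = -y := by
  simp [negY, ofRoots]

lemma equation_ofRoots_iff :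
    (ofRoots e₁ e₂ e₃).Equation x y ↔ y ^ 2 = (x - e₁) * (x - e₂) * (x - e₃) := by
  rw [equation_iff]
  simp only [ofRoots]
  constructor <;> intro h <;> linear_combination h

/- For `f = (X - e₁)(X - e₂)(X - e₃)` and any `t`,
`4y² (x(2P) - t) = ((x - t)² - f'(t))² - 4 f(t) (t + 2x - e₁ - e₂ - e₃)`. -/
lemma sq_sub_eq_of_addX_slope_eq [DecidableEq F] (hxy : (ofRoots e₁ e₂ e₃).Equation x y)
    (hy : y ≠ (ofRoots e₁ e₂ e₃).negY x y) {t : F} (ht : (t - e₁) * (t - e₂) * (t - e₃) = 0)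
    (h2t : (ofRoots e₁ e₂ e₃).addX x x ((ofRoots e₁ e₂ e₃).slope x x y y) = t) :
    (x - t) ^ 2 = 3 * t ^ 2 - 2 * (e₁ + e₂ + e₃) * t + (e₁ * e₂ + e₁ * e₃ + e₂ * e₃) := by
  have hℓ := slope_of_Y_ne rfl hy
  set ℓ := (ofRoots e₁ e₂ e₃).slope x x y y
  rw [negY_ofRoots] at hy hℓ
  rw [eq_div_iff (sub_ne_zero.mpr hy)] at hℓ
  rw [addX] at h2t
  simp only [ofRoots] at hℓ h2t
  have hsq : ((x - t) ^ 2 -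
      (3 * t ^ 2 - 2 * (e₁ + e₂ + e₃) * t + (e₁ * e₂ + e₁ * e₃ + e₂ * e₃))) ^ 2 = 0 := by
    linear_combination 4 * y ^ 2 * h2t
      - (2 * y * ℓ + (3 * x ^ 2 - 2 * (e₁ + e₂ + e₃) * x + (e₁ * e₂ + e₁ * e₃ + e₂ * e₃))) * hℓ
      - 4 * (e₁ + e₂ + e₃ - 2 * x - t) * equation_ofRoots_iff.mp hxy
      + 4 * (t + 2 * x - (e₁ + e₂ + e₃)) * ht
  exact sub_eq_zero.mp (pow_eq_zero_iff two_ne_zero |>.mp hsq)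

end ofRoots

namespace Point

variable [DecidableEq F] {W : Affine F} {x y : F}

lemma two_nsmul_some_eq_zero_iff (h : W.Nonsingular x y) :
    2 • some x y h = 0 ↔ y = W.negY x y := by
  rw [two_nsmul]
  refine ⟨fun h0 => ?_, add_self_of_Y_eq⟩
  by_contra hy
  exact some_ne_zero _ ((add_self_of_Y_ne hy).symm.trans h0)

lemma two_nsmul_some_of_Y_ne {h : W.Nonsingular x y} (hy : y ≠ W.negY x y) :
    2 • some x y h = some _ _ (nonsingular_add h h fun hxy => hy hxy.2) := by
  rw [two_nsmul, add_self_of_Y_ne hy]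

end Point

theorem sq_sub_root_eq_of_four_nsmul_eq_zero [DecidableEq F] {W : Affine F} {e₁ e₂ e₃ x y : F}
    (hW : W = ofRoots e₁ e₂ e₃) {h : W.Nonsingular x y}
    (h4 : 4 • Point.some x y h = 0) (h2 : 2 • Point.some x y h ≠ 0) :
    (x - e₁) ^ 2 = (e₁ - e₂) * (e₁ - e₃) ∨ (x - e₂) ^ 2 = (e₂ - e₁) * (e₂ - e₃) ∨
      (x - e₃) ^ 2 = (e₃ - e₁) * (e₃ - e₂) := by
  subst hW
  have hy : y ≠ (ofRoots e₁ e₂ e₃).negY x y := mt (Point.two_nsmul_some_eq_zero_iff h).mpr h2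
  have h2Q : 2 • (2 • Point.some x y h) = 0 := by rw [smul_smul]; exact h4
  rw [Point.two_nsmul_some_of_Y_ne hy, Point.two_nsmul_some_eq_zero_iff, negY_ofRoots,
    eq_neg_iff_add_eq_zero] at h2Q
  have hQ := equation_ofRoots_iff.mp (nonsingular_add h h fun hxy => hy hxy.2).1
  set x' := (ofRoots e₁ e₂ e₃).addX x x ((ofRoots e₁ e₂ e₃).slope x x y y)
  have h2F : (2 : F) ≠ 0 := by
    rw [negY_ofRoots, ne_eq, eq_neg_iff_add_eq_zero, ← two_mul] at hy
    exact left_ne_zero_of_mul hy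
  have hroot : (x' - e₁) * (x' - e₂) * (x' - e₃) = 0 := by
    rw [← two_mul, mul_eq_zero, or_iff_right h2F] at h2Q
    rw [← hQ, h2Q, sq, zero_mul]
  have hx_of_root := fun t ht h2t => sq_sub_eq_of_addX_slope_eq h.1 hy (t := t) ht h2t
  rcases mul_eq_zero.mp hroot with h12 | h3
  · rcases mul_eq_zero.mp h12 with h1 | h2
    · left; linear_combination hx_of_root e₁ (by ring) (sub_eq_zero.mp h1)
    · right; left; linear_combination hx_of_root e₂ (by ring) (sub_eq_zero.mp h2)
  · right; right; linear_combination hx_of_root e₃ (by ring) (sub_eq_zero.mp h3)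

end WeierstrassCurve.Affine

open Polynomial IntermediateField

theorem sq_eq_mul_or_sq_eq_mul_of_add_mul_sq_eq {R : Type*} [CommRing R] [IsDomain R]
    {a b d α β : R} (hαβ : α * β ≠ 0) (h₀ : a ^ 2 + α * β * b ^ 2 = d * α * β * (α + β))
    (h₁ : a * b = d * α * β) : b ^ 2 = d * α ∨ b ^ 2 = d * β := by
  have h : α * β * ((b ^ 2 - d * α) * (b ^ 2 - d * β)) = 0 := by
    linear_combination b ^ 2 * h₀ - (a * b + d * α * β) * h₁
  simpa [sub_eq_zero, hαβ] using h

theorem Int.eq_of_isSquare_mul {c d : ℤ} (hc : Squarefree c) (hd : Squarefree d)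
    (h : IsSquare ((d : ℚ) * c)) : d = c := by
  obtain ⟨m, hm⟩ :=
    Rat.isSquare_intCast_iff.mp (by exact_mod_cast h : IsSquare ((d * c : ℤ) : ℚ))
  obtain ⟨t, rfl⟩ : c ∣ m := hc.isRadical 2 m ⟨d, by rw [sq, ← hm]; ring⟩
  have hdc : d = c * (t * t) := mul_right_cancel₀ hc.ne_zero (by linear_combination hm)
  rw [hdc, Int.isUnit_mul_self (hd t ⟨c, by rw [hdc]; ring⟩), mul_one]

section QuadraticExtension

variable {F K : Type*} [Field F] [Field K] [Algebra F K]

theorem exists_eq_add_mul_sub_of_mem_adjoin {x : K} {e D : F}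
    (hx : (x - algebraMap F K e) ^ 2 = algebraMap F K D) {z : K} (hz : z ∈ F⟮x⟯) :
    ∃ a b : F, z = algebraMap F K a + algebraMap F K b * (x - algebraMap F K e) := by
  set m : F[X] := (X - C e) ^ 2 - C D
  have hm : m.Monic := by unfold m; monicity!
  have hm2 : m.natDegree = 2 := by unfold m; compute_degree!
  have hmx : aeval x m = 0 := by simp [m, hx]
  rw [← mem_toSubalgebra, adjoin_simple_toSubalgebra_of_isAlgebraic
    (IsIntegral.isAlgebraic ⟨m, hm, hmx⟩), Algebra.adjoin_singleton_eq_range_aeval] at hz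
  obtain ⟨p, rfl⟩ := hz
  obtain ⟨b, c, hbc⟩ := exists_eq_X_add_C_of_natDegree_le_one (p := p %ₘ m)
    (Nat.le_of_lt_succ (hm2 ▸ natDegree_modByMonic_lt p hm (fun h1 => by simp [h1] at hm2) :))
  refine ⟨c + b * e, b, ?_⟩
  rw [AlgHom.toRingHom_eq_coe, RingHom.coe_coe, ← aeval_modByMonic_eq_self_of_root hmx, hbc]
  simp only [map_add, map_mul, aeval_C, aeval_X]
  ring

theorem eq_zero_and_eq_zero_of_add_mul_eq_zero {s : K} {D : F} (hs : s ^ 2 = algebraMap F K D)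
    (hD : ¬IsSquare D) {u v : F} (h : algebraMap F K u + algebraMap F K v * s = 0) :
    u = 0 ∧ v = 0 := by
  by_cases hv : v = 0
  · subst hv
    simpa using h
  refine absurd ⟨-u / v, (algebraMap F K).injective ?_⟩ hD
  have hs' : s = algebraMap F K (-u / v) := by
    rw [map_div₀, map_neg, eq_div_iff (by simpa using hv)]
    linear_combination h
  rw [← hs, hs', ← map_pow, sq]

theorem isSquare_mul_or_of_exists_sq_eq_mul (h2 : (2 : F) ≠ 0) {x : K} {e α β d : F}
    (hx : (x - algebraMap F K e) ^ 2 = algebraMap F K (α * β)) (hαβ : ¬IsSquare (α * β))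
    (hz : ∃ z ∈ F⟮x⟯, z ^ 2 = algebraMap F K d * ((x - algebraMap F K e) *
      (x - algebraMap F K e + algebraMap F K α) * (x - algebraMap F K e + algebraMap F K β))) :
    IsSquare (d * α) ∨ IsSquare (d * β) := by
  obtain ⟨z, hz_mem, hz⟩ := hz
  obtain ⟨a, b, rfl⟩ := exists_eq_add_mul_sub_of_mem_adjoin hx hz_mem
  set s := x - algebraMap F K e
  obtain ⟨h₀, h₁⟩ := eq_zero_and_eq_zero_of_add_mul_eq_zero hx hαβ
    (u := a ^ 2 + α * β * b ^ 2 - d * α * β * (α + β)) (v := 2 * (a * b - d * α * β)) (by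
      simp only [map_add, map_sub, map_mul, map_pow, map_ofNat] at hx hz ⊢
      linear_combination hz - (algebraMap F K b ^ 2 -
        algebraMap F K d * (s + algebraMap F K α + algebraMap F K β)) * hx)
  rcases sq_eq_mul_or_sq_eq_mul_of_add_mul_sq_eq (fun h0 => hαβ (h0 ▸ .zero)) (sub_eq_zero.mp h₀)
    (sub_eq_zero.mp ((mul_eq_zero.mp h₁).resolve_left h2)) with h | h
  · exact .inl ⟨b, h.symm.trans (sq b)⟩
  · exact .inr ⟨b, h.symm.trans (sq b)⟩

end QuadraticExtension

theorem E17_eq_ofRoots : E17 = ofRoots 8 9 (-18) := by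
  ext <;> simp only [E17, ofRoots] <;> norm_num

theorem exists_isSquare_mul_of_E17_order_four [DecidableEq (AlgebraicClosure ℚ)]
    {x₀ y₀ : AlgebraicClosure ℚ} {h : E17.Nonsingular x₀ y₀}
    (h4 : 4 • Point.some x₀ y₀ h = 0) (h2 : 2 • Point.some x₀ y₀ h ≠ 0) {d : ℚ}
    (hz : ∃ z ∈ ℚ⟮x₀⟯, z ^ 2 = (d : AlgebraicClosure ℚ) * ((x₀ - 8) * (x₀ - 9) * (x₀ + 18))) :
    ∃ c ∈ ({-26, -3, -1, 1, 3, 26} : Set ℤ), IsSquare (d * c) := by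
  obtain ⟨z, hz_mem, hz⟩ := hz
  rcases sq_sub_root_eq_of_four_nsmul_eq_zero E17_eq_ofRoots h4 h2 with hx | hx | hx
  · rcases isSquare_mul_or_of_exists_sq_eq_mul (F := ℚ) (e := 8) (α := -1) (β := 26)
      two_ne_zero (by norm_num at hx ⊢; exact hx) (by norm_num)
      ⟨z, hz_mem, by simp [hz]; ring⟩ with h | h
    · exact ⟨-1, by simp, by exact_mod_cast h⟩
    · exact ⟨26, by simp, by exact_mod_cast h⟩
  · rcases isSquare_mul_or_of_exists_sq_eq_mul (F := ℚ) (e := 9) (α := 1) (β := 27)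
      two_ne_zero (by norm_num at hx ⊢; exact hx) (by norm_num)
      ⟨z, hz_mem, by simp [hz]; ring⟩ with h | h
    · exact ⟨1, by simp, by exact_mod_cast h⟩
    · obtain ⟨r, hr⟩ := h
      exact ⟨3, by simp, r / 3, by push_cast; linear_combination hr / 9⟩
  · rcases isSquare_mul_or_of_exists_sq_eq_mul (F := ℚ) (e := -18) (α := -26) (β := -27)
      two_ne_zero (by norm_num at hx ⊢; exact hx) (by norm_num)
      ⟨z, hz_mem, by simp [hz]; ring⟩ with h | h
    · exact ⟨-26, by simp, by exact_mod_cast h⟩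
    · obtain ⟨r, hr⟩ := h
      exact ⟨-3, by simp, r / 3, by push_cast; linear_combination hr / 9⟩

open Classical in
/-- If `d` is a squarefree integer with `d ∉ {-26,-3,-1,1,3,26}` and `x₀ ∈ ℚ̄` is the
`x`-coordinate of a point of order 4 on `E : y² = (x-8)(x-9)(x+18)`, then
`d·f₁(x₀)` is not a square in `ℚ(x₀)`, where `f₁(x) = (x-8)(x-9)(x+18)`. -/
theorem stmt17 (d : ℤ) (hd : Squarefree d) (hdn : d ∉ ({-26, -3, -1, 1, 3, 26} : Set ℤ))
    (x₀ : AlgebraicClosure ℚ)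
    (h4 : ∃ (y₀ : AlgebraicClosure ℚ) (h : E17.Nonsingular x₀ y₀),
      (4 : ℕ) • Point.some x₀ y₀ h = (0 : E17.Point) ∧
      (2 : ℕ) • Point.some x₀ y₀ h ≠ (0 : E17.Point)) :
    ¬ ∃ z : (IntermediateField.adjoin ℚ {x₀} : IntermediateField ℚ (AlgebraicClosure ℚ)),
      (z : AlgebraicClosure ℚ) ^ 2 = (d : AlgebraicClosure ℚ) *
        ((x₀ - 8) * (x₀ - 9) * (x₀ + 18)) := by
  obtain ⟨y₀, h, h4, h2⟩ := h4
  rintro ⟨z, hz⟩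
  obtain ⟨c, hc, hdc⟩ := exists_isSquare_mul_of_E17_order_four h4 h2 (d := d)
    ⟨z, z.2, by rw [hz, Rat.cast_intCast]⟩
  have hc_sf : Squarefree c := by
    rcases hc with rfl | rfl | rfl | rfl | rfl | rfl <;>
      rw [← Int.squarefree_natAbs, Nat.squarefree_iff_nodup_primeFactorsList (by norm_num)] <;>
      simp [Nat.primeFactorsList_ofNat]
  exact hdn (Int.eq_of_isSquare_mul hc_sf hd (by exact_mod_cast hdc) ▸ hc)
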